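/- Let $\mu>0$, $\sigma\neq0$, $\gamma\in[1/2,1)$, $T>0$, and let $u^*_t = e^{\mu t}\left[\frac{e^{-2(1-\gamma)\mu t}-e^{-2(1-\gamma)\mu T}}{1-e^{-2(1-\gamma)\mu T}}\right]^{1/(1-\gamma)}$. Then $\frac{1}{2\sigma^2}\int_0^T \left(\frac{\dot u^*_t - \mu u^*_t}{(u^*_t)^{\gamma}}\right)^2 dt = \frac{\mu}{\sigma^2(1-\gamma)\left(1-e^{-2\mu(1-\gamma)T}\right)} = \frac{1}{2\int_0^T \sigma^2(1-\gamma)^2 e^{-2(1-\gamma)\mu s}\,ds}$. -/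

import Mathlib

/-!
Write `u*ₜ = e^{μt} gₜ^{1/(1-γ)}` with `gₜ = (e^{bt} - e^{bT}) / (1 - e^{bT})` and `b = -2(1-γ)μ`.
Since `γ / (1-γ) = 1/(1-γ) - 1`, the drift `μu*` cancels in `u̇* - μu*` and the power of `g`
cancels against `(u*)^γ`, leaving the control `(u̇* - μu*)/(u*)^γ = e^{(1-γ)μt} ġ/(1-γ)`, which
for this `g` is `-2μ e^{-(1-γ)μt} / (1 - e^{bT})`. Its square is a multiple of `e^{bt}`, so the rate
function is an explicit exponential integral, and so is `⟨M⟩_T`.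
-/

open Real MeasureTheory

theorem integral_exp_mul {b : ℝ} (hb : b ≠ 0) (x y : ℝ) :
    ∫ t in x..y, exp (b * t) = (exp (b * y) - exp (b * x)) / b := by
  rw [intervalIntegral.integral_comp_mul_left (fun t => exp t) hb, integral_exp, smul_eq_mul,
    inv_mul_eq_div]

theorem integral_exp_mul_zero {b : ℝ} (hb : b ≠ 0) (T : ℝ) :
    ∫ t in (0 : ℝ)..T, exp (b * t) = (1 - exp (b * T)) / -b := by
  rw [integral_exp_mul hb, mul_zero, exp_zero, div_neg, ← neg_div, neg_sub]

theorem one_sub_exp_mul_pos {b T : ℝ} (hb : b < 0) (hT : 0 < T) : 0 < 1 - exp (b * T) :=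
  sub_pos.2 (exp_lt_one_iff.2 (mul_neg_of_neg_of_pos hb hT))

theorem deriv_sub_mul_div_rpow_of_eq_exp_mul_rpow {μ γ t g' : ℝ} {g u : ℝ → ℝ} (hγ : γ ≠ 1)
    (hu : u = fun s => exp (μ * s) * g s ^ (1 / (1 - γ))) (hg : HasDerivAt g g' t)
    (hgt : 0 < g t) :
    (deriv u t - μ * u t) / u t ^ γ = exp ((1 - γ) * μ * t) * g' / (1 - γ) := by
  have hκ : 1 - γ ≠ 0 := sub_ne_zero.2 hγ.symm
  have hu' : HasDerivAt u (μ * exp (μ * t) * g t ^ (1 / (1 - γ))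
      + exp (μ * t) * (g' * (1 / (1 - γ)) * g t ^ (1 / (1 - γ) - 1))) t := by
    rw [hu]
    exact ((hasDerivAt_id t).const_mul μ |>.exp.congr_deriv (by simp [mul_comm])).mul
      (hg.rpow_const (Or.inl hgt.ne'))
  have hexp : 1 / (1 - γ) * γ = 1 / (1 - γ) - 1 := by field_simp; ring
  have hden : u t ^ γ = exp (μ * t * γ) * g t ^ (1 / (1 - γ) - 1) := by
    rw [hu, mul_rpow (exp_pos _).le (rpow_nonneg hgt.le _), ← exp_mul, ← rpow_mul hgt.le, hexp]
  have hsplit : exp (μ * t) = exp (μ * t * γ) * exp ((1 - γ) * μ * t) := by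
    rw [← exp_add]; ring_nf
  rw [hu'.deriv, hden, hu]
  beta_reduce
  rw [hsplit]
  field_simp
  ring

noncomputable def mostLikelyPath (μ γ T t : ℝ) : ℝ :=
  exp (μ * t) * ((exp (-2 * (1 - γ) * μ * t) - exp (-2 * (1 - γ) * μ * T)) /
    (1 - exp (-2 * (1 - γ) * μ * T))) ^ (1 / (1 - γ))

section mostLikelyPath

variable {μ γ T : ℝ}

theorem mostLikelyPath_control_sq {t : ℝ} (hμ : 0 < μ) (hγ : γ < 1) (hT : 0 < T) (ht : t < T) :
    ((deriv (mostLikelyPath μ γ T) t - μ * mostLikelyPath μ γ T t) /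
        mostLikelyPath μ γ T t ^ γ) ^ 2
      = (2 * μ / (1 - exp (-2 * (1 - γ) * μ * T))) ^ 2 * exp (-2 * (1 - γ) * μ * t) := by
  set b := -2 * (1 - γ) * μ with hb
  set D := 1 - exp (b * T)
  have hb_neg : b < 0 := by nlinarith
  have hD : 0 < D := one_sub_exp_mul_pos hb_neg hT
  have hg : HasDerivAt (fun s => (exp (b * s) - exp (b * T)) / D) (b * exp (b * t) / D) t :=
    (((hasDerivAt_id t).const_mul b).exp.congr_deriv (by simp [mul_comm])).sub_const _
      |>.div_const D
  have hgt : 0 < (exp (b * t) - exp (b * T)) / D :=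
    div_pos (sub_pos.2 (exp_lt_exp.2 (mul_lt_mul_of_neg_left ht hb_neg))) hD
  rw [deriv_sub_mul_div_rpow_of_eq_exp_mul_rpow (u := mostLikelyPath μ γ T) hγ.ne rfl hg hgt]
  have hsq : (exp ((1 - γ) * μ * t) * exp (b * t)) ^ 2 = exp (b * t) := by
    rw [← exp_add, ← exp_nat_mul]; congr 1; push_cast; ring
  have hκ : 1 - γ ≠ 0 := by linarith
  calc (exp ((1 - γ) * μ * t) * (b * exp (b * t) / D) / (1 - γ)) ^ 2
      = (b / (1 - γ) / D) ^ 2 * (exp ((1 - γ) * μ * t) * exp (b * t)) ^ 2 := by ring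
    _ = (2 * μ / D) ^ 2 * exp (b * t) := by rw [hsq, hb]; field_simp

theorem integral_mostLikelyPath_control_sq (hμ : 0 < μ) (hγ : γ < 1) (hT : 0 < T) :
    ∫ t in (0 : ℝ)..T, ((deriv (mostLikelyPath μ γ T) t - μ * mostLikelyPath μ γ T t) /
        mostLikelyPath μ γ T t ^ γ) ^ 2
      = 2 * μ / ((1 - γ) * (1 - exp (-2 * (1 - γ) * μ * T))) := by
  have hb : -2 * (1 - γ) * μ < 0 := by nlinarith
  have hD := (one_sub_exp_mul_pos hb hT).ne'
  have hκ : 1 - γ ≠ 0 := by linarith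
  rw [intervalIntegral.integral_congr_Ioo_of_le hT.le
      (fun t ht => mostLikelyPath_control_sq hμ hγ hT ht.2),
    intervalIntegral.integral_const_mul, integral_exp_mul_zero hb.ne]
  field_simp

end mostLikelyPath

theorem rate_function_at_most_likely_path_general (μ σ γ T : ℝ) (hμ : 0 < μ)
    (hγ : γ ∈ Set.Ico (1/2 : ℝ) 1) (hT : 0 < T)
    (ustar : ℝ → ℝ)
    (hu : ∀ t, ustar t = Real.exp (μ*t) *
      ((Real.exp (-2*(1-γ)*μ*t) - Real.exp (-2*(1-γ)*μ*T)) /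
        (1 - Real.exp (-2*(1-γ)*μ*T))) ^ (1/(1-γ))) :
    (1/(2*σ^2)) * (∫ t in (0:ℝ)..T,
        ((deriv ustar t - μ * ustar t) / (ustar t) ^ γ)^2)
      = μ / (σ^2*(1-γ)*(1 - Real.exp (-2*μ*(1-γ)*T)))
    ∧ μ / (σ^2*(1-γ)*(1 - Real.exp (-2*μ*(1-γ)*T)))
      = 1 / (2 * ∫ s in (0:ℝ)..T, σ^2*(1-γ)^2 * Real.exp (-2*(1-γ)*μ*s)) := by
  obtain ⟨-, hγ1⟩ := hγ
  obtain rfl : ustar = mostLikelyPath μ γ T := funext hu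
  have hb : -2 * (1 - γ) * μ < 0 := by nlinarith
  have hD := (one_sub_exp_mul_pos hb hT).ne'
  have hκ : 1 - γ ≠ 0 := by linarith
  rw [show -2 * μ * (1 - γ) * T = -2 * (1 - γ) * μ * T by ring,
    integral_mostLikelyPath_control_sq hμ hγ1 hT, intervalIntegral.integral_const_mul,
    integral_exp_mul_zero hb.ne]
  constructor <;> field_simp

theorem rate_function_at_most_likely_path (μ σ γ T : ℝ) (hμ : 0 < μ) (hσ : σ ≠ 0)
    (hγ : γ ∈ Set.Ico (1/2 : ℝ) 1) (hT : 0 < T)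
    (ustar : ℝ → ℝ)
    (hu : ∀ t, ustar t = Real.exp (μ*t) *
      ((Real.exp (-2*(1-γ)*μ*t) - Real.exp (-2*(1-γ)*μ*T)) /
        (1 - Real.exp (-2*(1-γ)*μ*T))) ^ (1/(1-γ))) :
    (1/(2*σ^2)) * (∫ t in (0:ℝ)..T,
        ((deriv ustar t - μ * ustar t) / (ustar t) ^ γ)^2)
      = μ / (σ^2*(1-γ)*(1 - Real.exp (-2*μ*(1-γ)*T)))
    ∧ μ / (σ^2*(1-γ)*(1 - Real.exp (-2*μ*(1-γ)*T)))
      = 1 / (2 * ∫ s in (0:ℝ)..T, σ^2*(1-γ)^2 * Real.exp (-2*(1-γ)*μ*s)) :=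
  rate_function_at_most_likely_path_general μ σ γ T hμ hγ hT ustar hu
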